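/- Let ε > 0, t ≥ 0, d ∈ ℕ, let ω₀ : ℝ^d → ℂ be twice continuously differentiable on a neighborhood of a point x with ω₀(x) ≠ 0, and let e_j, e_k be standard basis vectors of ℝ^d. Then the function w(y) = ω₀(y)·exp(−2it·ln(ε + |ω₀(y)|)) is twice differentiable at x and |∂_k ∂_j w(x)| ≤ (1 + 2t)·|∂_k ∂_j ω₀(x)| + ((10t + 4t²)/(ε + |ω₀(x)|))·|∂_j ω₀(x)|·|∂_k ω₀(x)|. -/

import Mathlib

/-!
Write `w = Φ ∘ ω₀` with `Φ z = z * h ‖z‖` and `h r = exp (-2 i t log (ε + r))`. The second-order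
chain rule gives `∂ₖ∂ⱼ w = DΦ(ω₀)[∂ₖ∂ⱼ ω₀] + D²Φ(ω₀)[∂ₖ ω₀, ∂ⱼ ω₀]`. For any radial profile `h`,
differentiating `z * h ‖z‖` twice bounds `DΦ(z)` by `|h r| + r |h' r|` and `D²Φ(z)` by
`4 |h' r| + r |h'' r|`, where `r = ‖z‖`. Here `|h| = 1`, `|h'| = 2t / (ε + r)` and
`|h''| ≤ 2t (1 + 2t) / (ε + r)²`, which produce the constants `1 + 2t` and `(10t + 4t²) / (ε + r)`.
-/

open scoped RealInnerProductSpace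
open Topology

section InnerProductSpace

variable {F : Type*} [NormedAddCommGroup F] [InnerProductSpace ℝ F] {z : F}

theorem hasFDerivAt_norm_of_ne_zero (hz : z ≠ 0) :
    HasFDerivAt (‖·‖) (‖z‖⁻¹ • innerSL ℝ z) z := by
  have hsqrt : HasDerivAt Real.sqrt (2 * ‖z‖)⁻¹ (‖z‖ ^ 2) := by
    simpa [Real.sqrt_sq (norm_nonneg z)] using
      Real.hasDerivAt_sqrt (pow_ne_zero 2 (norm_ne_zero_iff.mpr hz))
  have := hsqrt.comp_hasFDerivAt z (hasStrictFDerivAt_norm_sq z).hasFDerivAt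
  simp only [Function.comp_def, Real.sqrt_sq (norm_nonneg _)] at this
  refine this.congr_fderiv ?_
  ext u
  simp only [mul_inv_rev, smul_apply, coe_innerSL_apply, nsmul_eq_mul, Nat.cast_ofNat, smul_eq_mul]
  field_simp

theorem hasFDerivAt_inner_div_norm (hz : z ≠ 0) (v : F) :
    HasFDerivAt (fun y => ⟪y, v⟫ / ‖y‖)
      (‖z‖⁻¹ • innerSL ℝ v - (⟪z, v⟫ / ‖z‖ ^ 3) • innerSL ℝ z) z := by
  have hz' : ‖z‖ ≠ 0 := norm_ne_zero_iff.mpr hz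
  have := ((hasFDerivAt_id z).inner ℝ (hasFDerivAt_const v z)).mul
    ((hasDerivAt_inv hz').comp_hasFDerivAt z (hasFDerivAt_norm_of_ne_zero hz))
  simp only [div_eq_mul_inv]
  refine this.congr_fderiv ?_
  ext u
  simp only [id_eq, neg_smul, smul_neg, Function.comp_apply, add_apply, neg_apply, smul_apply,
    coe_innerSL_apply, smul_eq_mul, ContinuousLinearMap.comp_apply, ContinuousLinearMap.prod_apply,
    ContinuousLinearMap.id_apply, zero_apply, fderivInnerCLM_apply, inner_zero_right,
    real_inner_comm, zero_add, sub_apply]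
  field_simp
  ring

theorem abs_inner_div_norm_le (z v : F) : |⟪z, v⟫ / ‖z‖| ≤ ‖v‖ := by
  rcases eq_or_ne z 0 with rfl | hz
  · simp
  rw [abs_div, abs_norm, div_le_iff₀ (norm_pos_iff.mpr hz), mul_comm]
  exact abs_real_inner_le_norm z v

theorem abs_inner_div_norm_deriv_le (hz : z ≠ 0) (u v : F) :
    |‖z‖⁻¹ * ⟪v, u⟫ - ⟪z, v⟫ / ‖z‖ ^ 3 * ⟪z, u⟫| ≤ 2 * (‖u‖ * ‖v‖) / ‖z‖ := by
  have h₁ : |⟪v, u⟫| ≤ ‖u‖ * ‖v‖ := by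
    rw [mul_comm]; exact abs_real_inner_le_norm v u
  have h₂ : |⟪z, v⟫| * |⟪z, u⟫| ≤ ‖z‖ ^ 2 * (‖u‖ * ‖v‖) := by
    calc |⟪z, v⟫| * |⟪z, u⟫| ≤ (‖z‖ * ‖v‖) * (‖z‖ * ‖u‖) := by
          gcongr <;> exact abs_real_inner_le_norm _ _
      _ = _ := by ring
  calc |‖z‖⁻¹ * ⟪v, u⟫ - ⟪z, v⟫ / ‖z‖ ^ 3 * ⟪z, u⟫|
      ≤ |⟪v, u⟫| / ‖z‖ + |⟪z, v⟫| * |⟪z, u⟫| / ‖z‖ ^ 3 := by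
        refine (abs_sub _ _).trans_eq ?_
        rw [abs_mul, abs_inv, abs_norm, abs_mul, abs_div, abs_pow, abs_norm]
        ring
    _ ≤ (‖u‖ * ‖v‖) / ‖z‖ + ‖z‖ ^ 2 * (‖u‖ * ‖v‖) / ‖z‖ ^ 3 := by gcongr
    _ = 2 * (‖u‖ * ‖v‖) / ‖z‖ := by field_simp; ring

end InnerProductSpace

section SecondOrderChainRule

variable {𝕜 E F G : Type*} [NontriviallyNormedField 𝕜]
  [NormedAddCommGroup E] [NormedSpace 𝕜 E] [NormedAddCommGroup F] [NormedSpace 𝕜 F]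
  [NormedAddCommGroup G] [NormedSpace 𝕜 G] {g : F → G} {f : E → F} {x : E}

theorem hasFDerivAt_fderiv_comp_apply (hg : ContDiffAt 𝕜 2 g (f x)) (hf : ContDiffAt 𝕜 2 f x)
    (v : E) :
    HasFDerivAt (fun y => fderiv 𝕜 (g ∘ f) y v)
      ((fderiv 𝕜 g (f x)).comp (fderiv 𝕜 (fun y => fderiv 𝕜 f y v) x) +
        (fderiv 𝕜 (fun z => fderiv 𝕜 g z (fderiv 𝕜 f x v)) (f x)).comp (fderiv 𝕜 f x)) x := by
  have hg' : DifferentiableAt 𝕜 (fderiv 𝕜 g) (f x) :=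
    (hg.fderiv_right (m := 1) le_rfl).differentiableAt one_ne_zero
  have hf' : DifferentiableAt 𝕜 (fderiv 𝕜 f) x :=
    (hf.fderiv_right (m := 1) le_rfl).differentiableAt one_ne_zero
  have hcomp : (fun y => fderiv 𝕜 (g ∘ f) y v) =ᶠ[𝓝 x]
      fun y => fderiv 𝕜 g (f y) (fderiv 𝕜 f y v) := by
    have hgf : ∀ᶠ y in 𝓝 x, DifferentiableAt 𝕜 g (f y) :=
      hf.continuousAt.eventually ((hg.eventually (by simp)).mono
        fun z hz => hz.differentiableAt two_ne_zero)
    filter_upwards [hgf, hf.eventually (by simp)] with y hgy hfy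
    rw [fderiv_comp y hgy (hfy.differentiableAt two_ne_zero)]
    rfl
  refine HasFDerivAt.congr_of_eventuallyEq ?_ hcomp
  have := (hg'.hasFDerivAt.comp x (hf.differentiableAt two_ne_zero).hasFDerivAt).clm_apply
    (hf'.clm_apply (differentiableAt_const v)).hasFDerivAt
  refine this.congr_fderiv ?_
  rw [fderiv_clm_apply hg' (differentiableAt_const _)]
  ext u
  simp

end SecondOrderChainRule

section RadialProfile

variable {h h' : ℝ → ℂ} {h₁ h'' : ℂ} {z : ℂ}

theorem fderiv_mul_comp_norm_apply (hz : z ≠ 0) (hh : HasDerivAt h h₁ ‖z‖) (v : ℂ) :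
    fderiv ℝ (fun y : ℂ => y * h ‖y‖) z v = h ‖z‖ * v + h₁ * (⟪z, v⟫ / ‖z‖ : ℝ) * z := by
  have : HasFDerivAt (fun y : ℂ => y * h ‖y‖) _ z :=
    (hasFDerivAt_id z).mul (hh.hasFDerivAt.comp z (hasFDerivAt_norm_of_ne_zero hz))
  rw [this.fderiv]
  simp only [add_apply, smul_apply,
    ContinuousLinearMap.comp_apply, innerSL_apply_apply, ContinuousLinearMap.toSpanSingleton_apply,
    ContinuousLinearMap.id_apply, smul_eq_mul, Complex.real_smul, id_eq]
  push_cast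
  ring

theorem fderiv_fderiv_mul_comp_norm_apply (hz : z ≠ 0)
    (hh : ∀ᶠ s in 𝓝 ‖z‖, HasDerivAt h (h' s) s) (hh' : HasDerivAt h' h'' ‖z‖) (u v : ℂ) :
    fderiv ℝ (fun y => fderiv ℝ (fun y : ℂ => y * h ‖y‖) y v) z u =
      h' ‖z‖ * (⟪z, u⟫ / ‖z‖ : ℝ) * v + h' ‖z‖ * (⟪z, v⟫ / ‖z‖ : ℝ) * u +
        (h'' * (⟪z, u⟫ / ‖z‖ : ℝ) * (⟪z, v⟫ / ‖z‖ : ℝ) +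
          h' ‖z‖ * (‖z‖⁻¹ * ⟪v, u⟫ - ⟪z, v⟫ / ‖z‖ ^ 3 * ⟪z, u⟫ : ℝ)) * z := by
  have hnorm := hasFDerivAt_norm_of_ne_zero hz
  have hfirst : (fun y => fderiv ℝ (fun y : ℂ => y * h ‖y‖) y v) =ᶠ[𝓝 z]
      fun y => h ‖y‖ * v + h' ‖y‖ * (⟪y, v⟫ / ‖y‖ : ℝ) * y := by
    filter_upwards [continuous_norm.continuousAt.eventually hh, eventually_ne_nhds hz]
      with y hy hy0
    exact fderiv_mul_comp_norm_apply hy0 hy v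
  have hderiv : HasFDerivAt (fun y => h ‖y‖ * v + h' ‖y‖ * (⟪y, v⟫ / ‖y‖ : ℝ) * y) _ z :=
    ((hh.self_of_nhds.hasFDerivAt.comp z hnorm).mul_const v).add
      (((hh'.hasFDerivAt.comp z hnorm).mul
        (Complex.ofRealCLM.hasFDerivAt.comp z (hasFDerivAt_inner_div_norm hz v))).mul
          (hasFDerivAt_id z))
  rw [hfirst.fderiv_eq, hderiv.fderiv]
  simp only [add_apply, smul_apply,
    ContinuousLinearMap.comp_apply, innerSL_apply_apply, ContinuousLinearMap.toSpanSingleton_apply,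
    ContinuousLinearMap.id_apply, smul_eq_mul, Complex.real_smul, Function.comp_apply, Pi.mul_apply,
    Complex.ofRealCLM_apply, sub_apply]
  push_cast
  ring

theorem norm_fderiv_mul_comp_norm_apply_le (hz : z ≠ 0) (hh : HasDerivAt h h₁ ‖z‖) (v : ℂ) :
    ‖fderiv ℝ (fun y : ℂ => y * h ‖y‖) z v‖ ≤ (‖h ‖z‖‖ + ‖z‖ * ‖h₁‖) * ‖v‖ := by
  rw [fderiv_mul_comp_norm_apply hz hh v]
  calc _ ≤ ‖h ‖z‖‖ * ‖v‖ + ‖h₁‖ * |⟪z, v⟫ / ‖z‖| * ‖z‖ :=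
        (norm_add_le _ _).trans_eq (by simp only [norm_mul, Complex.norm_real, Real.norm_eq_abs])
    _ ≤ ‖h ‖z‖‖ * ‖v‖ + ‖h₁‖ * ‖v‖ * ‖z‖ := by gcongr; exact abs_inner_div_norm_le z v
    _ = _ := by ring

theorem norm_fderiv_fderiv_mul_comp_norm_apply_le (hz : z ≠ 0)
    (hh : ∀ᶠ s in 𝓝 ‖z‖, HasDerivAt h (h' s) s) (hh' : HasDerivAt h' h'' ‖z‖) (u v : ℂ) :
    ‖fderiv ℝ (fun y => fderiv ℝ (fun y : ℂ => y * h ‖y‖) y v) z u‖ ≤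
      (4 * ‖h' ‖z‖‖ + ‖z‖ * ‖h''‖) * (‖u‖ * ‖v‖) := by
  have hu := abs_inner_div_norm_le z u
  have hv := abs_inner_div_norm_le z v
  have huv := abs_inner_div_norm_deriv_le hz u v
  rw [fderiv_fderiv_mul_comp_norm_apply hz hh hh' u v]
  set a := ⟪z, u⟫ / ‖z‖
  set b := ⟪z, v⟫ / ‖z‖
  set q := ‖z‖⁻¹ * ⟪v, u⟫ - ⟪z, v⟫ / ‖z‖ ^ 3 * ⟪z, u⟫
  calc _ ≤ ‖h' ‖z‖ * a * v‖ + ‖h' ‖z‖ * b * u‖ + ‖(h'' * a * b + h' ‖z‖ * q) * z‖ :=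
        norm_add₃_le
    _ ≤ ‖h' ‖z‖‖ * |a| * ‖v‖ + ‖h' ‖z‖‖ * |b| * ‖u‖ +
        (‖h''‖ * |a| * |b| + ‖h' ‖z‖‖ * |q|) * ‖z‖ := by
        simp only [norm_mul, Complex.norm_real, Real.norm_eq_abs]
        gcongr
        exact (norm_add_le _ _).trans_eq
          (by simp only [norm_mul, Complex.norm_real, Real.norm_eq_abs])
    _ ≤ ‖h' ‖z‖‖ * ‖u‖ * ‖v‖ + ‖h' ‖z‖‖ * ‖v‖ * ‖u‖ +
        (‖h''‖ * ‖u‖ * ‖v‖ + ‖h' ‖z‖‖ * (2 * (‖u‖ * ‖v‖) / ‖z‖)) * ‖z‖ := by gcongr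
    _ = _ := by field_simp; ring

end RadialProfile

section LogarithmicProfile

variable {ε s : ℝ}

theorem hasDerivAt_cexp_mul_log_add (c : ℂ) (hs : ε + s ≠ 0) :
    HasDerivAt (fun s : ℝ => Complex.exp (c * Real.log (ε + s)))
      (c / (ε + s) * Complex.exp (c * Real.log (ε + s))) s := by
  refine (((hasDerivAt_id' s).const_add ε).log hs).ofReal_comp.const_mul c |>.cexp
    |>.congr_deriv ?_
  push_cast
  ring

theorem hasDerivAt_div_mul_cexp_mul_log_add (c : ℂ) (hs : ε + s ≠ 0) :
    HasDerivAt (fun s : ℝ => c / (ε + s) * Complex.exp (c * Real.log (ε + s)))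
      (c * (c - 1) / (ε + s) ^ 2 * Complex.exp (c * Real.log (ε + s))) s := by
  have hs' : (ε : ℂ) + s ≠ 0 := by exact_mod_cast hs
  refine ((hasDerivAt_const s c).div ((hasDerivAt_id' s).ofReal_comp.const_add (ε : ℂ)) hs').mul
      (hasDerivAt_cexp_mul_log_add c hs) |>.congr_deriv ?_
  simp only [Pi.div_apply, Complex.ofReal_one]
  field_simp
  ring

end LogarithmicProfile

noncomputable def logPhaseFlow (ε t : ℝ) (z : ℂ) : ℂ :=
  z * Complex.exp (-2 * Complex.I * t * Real.log (ε + ‖z‖))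

section LogPhaseFlow

variable {ε t : ℝ} {z : ℂ}

theorem contDiffAt_logPhaseFlow (hε : 0 ≤ ε) (hz : z ≠ 0) :
    ContDiffAt ℝ 2 (logPhaseFlow ε t) z := by
  have hr : ε + ‖z‖ ≠ 0 := by positivity
  have hlog : ContDiffAt ℝ 2 (fun y : ℂ => Real.log (ε + ‖y‖)) z :=
    (contDiffAt_const.add (contDiffAt_norm ℝ hz)).log hr
  exact contDiffAt_id.mul
    (contDiffAt_const.mul (Complex.ofRealCLM.contDiff.contDiffAt.comp z hlog)).cexp

theorem norm_cexp_neg_two_I_mul (t x : ℝ) : ‖Complex.exp (-2 * Complex.I * t * x)‖ = 1 := by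
  rw [Complex.norm_exp]
  simp

theorem norm_neg_two_I_mul (ht : 0 ≤ t) : ‖-2 * Complex.I * t‖ = 2 * t := by
  simp [abs_of_nonneg ht]

theorem norm_ofReal_add_ofReal {a b : ℝ} (h : 0 ≤ a + b) : ‖(a : ℂ) + b‖ = a + b := by
  rw [← Complex.ofReal_add, Complex.norm_real, Real.norm_of_nonneg h]

theorem norm_logPhase_deriv {s : ℝ} (ht : 0 ≤ t) (hs : 0 < ε + s) :
    ‖-2 * Complex.I * t / (ε + s) * Complex.exp (-2 * Complex.I * t * Real.log (ε + s))‖ =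
      2 * t / (ε + s) := by
  rw [norm_mul, norm_div, norm_cexp_neg_two_I_mul, norm_neg_two_I_mul ht,
    norm_ofReal_add_ofReal hs.le, mul_one]

theorem norm_logPhase_deriv_deriv_le {s : ℝ} (ht : 0 ≤ t) (hs : 0 < ε + s) :
    ‖-2 * Complex.I * t * (-2 * Complex.I * t - 1) / (ε + s) ^ 2 *
      Complex.exp (-2 * Complex.I * t * Real.log (ε + s))‖ ≤ 2 * t * (2 * t + 1) / (ε + s) ^ 2 := by
  rw [norm_mul, norm_div, norm_cexp_neg_two_I_mul, norm_mul, norm_neg_two_I_mul ht, norm_pow,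
    norm_ofReal_add_ofReal hs.le, mul_one]
  gcongr
  exact (norm_sub_le _ _).trans_eq (by rw [norm_neg_two_I_mul ht, norm_one])

theorem norm_fderiv_logPhaseFlow_apply_le (hε : 0 ≤ ε) (ht : 0 ≤ t) (hz : z ≠ 0) (v : ℂ) :
    ‖fderiv ℝ (logPhaseFlow ε t) z v‖ ≤ (1 + 2 * t) * ‖v‖ := by
  have hr : 0 < ε + ‖z‖ := by positivity
  refine (norm_fderiv_mul_comp_norm_apply_le hz
    (hasDerivAt_cexp_mul_log_add (-2 * Complex.I * t) hr.ne') v).trans ?_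
  rw [norm_cexp_neg_two_I_mul, norm_logPhase_deriv ht hr]
  have key : ‖z‖ * (2 * t / (ε + ‖z‖)) ≤ 2 * t := by
    rw [mul_div_assoc', div_le_iff₀ hr]
    nlinarith
  exact mul_le_mul_of_nonneg_right (by linarith) (norm_nonneg v)

theorem norm_fderiv_fderiv_logPhaseFlow_apply_le (hε : 0 ≤ ε) (ht : 0 ≤ t) (hz : z ≠ 0)
    (u v : ℂ) :
    ‖fderiv ℝ (fun y => fderiv ℝ (logPhaseFlow ε t) y v) z u‖ ≤
      (10 * t + 4 * t ^ 2) / (ε + ‖z‖) * (‖u‖ * ‖v‖) := by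
  have hr : 0 < ε + ‖z‖ := by positivity
  have hh : ∀ᶠ s in 𝓝 ‖z‖,
      HasDerivAt (fun s : ℝ => Complex.exp (-2 * Complex.I * t * Real.log (ε + s)))
      (-2 * Complex.I * t / (ε + s) * Complex.exp (-2 * Complex.I * t * Real.log (ε + s))) s :=
    ((continuous_const.add continuous_id).continuousAt.eventually_ne hr.ne').mono
      fun s hs => hasDerivAt_cexp_mul_log_add _ hs
  refine (norm_fderiv_fderiv_mul_comp_norm_apply_le hz hh
    (hasDerivAt_div_mul_cexp_mul_log_add _ hr.ne') u v).trans
    (mul_le_mul_of_nonneg_right ?_ (by positivity))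
  rw [norm_logPhase_deriv ht hr]
  have hsecond := norm_logPhase_deriv_deriv_le ht hr
  calc 4 * (2 * t / (ε + ‖z‖)) + ‖z‖ * ‖_‖
      ≤ 4 * (2 * t / (ε + ‖z‖)) + (ε + ‖z‖) * (2 * t * (2 * t + 1) / (ε + ‖z‖) ^ 2) := by
        gcongr; linarith
    _ = (10 * t + 4 * t ^ 2) / (ε + ‖z‖) := by field_simp; ring

end LogPhaseFlow

theorem stmt_6 (ε t : ℝ) (hε : 0 < ε) (ht : 0 ≤ t) (d : ℕ)
    (ω₀ : EuclideanSpace ℝ (Fin d) → ℂ) (x : EuclideanSpace ℝ (Fin d))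
    (j k : Fin d) (hreg : ContDiffAt ℝ 2 ω₀ x) (hne : ω₀ x ≠ 0)
    (w : EuclideanSpace ℝ (Fin d) → ℂ)
    (hw : ∀ y, w y = ω₀ y *
        Complex.exp (-2 * Complex.I * t * (Real.log (ε + norm (ω₀ y)) : ℂ))) :
    DifferentiableAt ℝ w x ∧
    DifferentiableAt ℝ (fun y => fderiv ℝ w y (EuclideanSpace.single j 1)) x ∧
    norm (fderiv ℝ (fun y => fderiv ℝ w y (EuclideanSpace.single j 1)) x
        (EuclideanSpace.single k 1))
      ≤ (1 + 2 * t) *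
          norm (fderiv ℝ (fun y => fderiv ℝ ω₀ y (EuclideanSpace.single j 1)) x
            (EuclideanSpace.single k 1))
        + ((10 * t + 4 * t ^ 2) / (ε + norm (ω₀ x))) *
          (norm (fderiv ℝ ω₀ x (EuclideanSpace.single j 1)) *
            norm (fderiv ℝ ω₀ x (EuclideanSpace.single k 1))) := by
  obtain rfl : w = logPhaseFlow ε t ∘ ω₀ := funext hw
  have hflow := contDiffAt_logPhaseFlow (t := t) hε.le hne
  have hchain := hasFDerivAt_fderiv_comp_apply hflow hreg (EuclideanSpace.single j 1)
  refine ⟨(hflow.comp x hreg).differentiableAt two_ne_zero, hchain.differentiableAt, ?_⟩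
  rw [hchain.fderiv, add_apply, ContinuousLinearMap.comp_apply, ContinuousLinearMap.comp_apply,
    mul_comm ‖fderiv ℝ ω₀ x _‖]
  exact (norm_add_le _ _).trans (add_le_add
    (norm_fderiv_logPhaseFlow_apply_le hε.le ht hne _)
    (norm_fderiv_fderiv_logPhaseFlow_apply_le hε.le ht hne _ _))
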